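/- Let a, b, c be positive real numbers satisfying the strict triangle inequalities a < b + c, b < a + c, c < a + b together with a + b + c < 2π, and write sₐ = sin(a/2), s_b = sin(b/2), s_c = sin(c/2) and B = sin((a+b-c)/2)·sin((a+c-b)/2)·sin((b+c-a)/2). Then 2·sₐ·s_b·s_c/B ≥ (sₐ·s_b·s_c + sₐ³ + s_b³ + s_c³)/(2·sₐ·s_b·s_c) ≥ sₐ/s_b + s_b/s_c + s_c/sₐ − 1 ≥ (2/3)(sₐ/s_b + s_b/s_c + s_c/sₐ) ≥ 2. -/

import Mathlib

/-!
Put u, v, w = sin (a/2), sin (b/2), sin (c/2). The product formula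
sin (x + y) sin (x - y) = sin² x - sin² y and |sin (b/2) - sin (c/2)| ≤ |sin ((b - c)/2)| give
sin ((a+b-c)/2) sin ((a+c-b)/2) ≤ u² - (v - w)², and cyclically. Hence u, v, w are the sides of
a plane triangle and B ≤ (u+v-w)(u+w-v)(v+w-u), so the chain reduces to the planar one for
u, v, w, where 2uvw / ((u+v-w)(u+w-v)(v+w-u)) = R/r. Its first step is Schur's inequality
after the Ravi substitution u = m + n, v = m + p, w = n + p; the last one is AM-GM.
-/

open Real

theorem schur_nonneg {x y z : ℝ} (hx : 0 ≤ x) (hy : 0 ≤ y) (hz : 0 ≤ z) :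
    0 ≤ x * (x - y) * (x - z) + y * (y - x) * (y - z) + z * (z - x) * (z - y) := by
  wlog hxy : y ≤ x generalizing x y z
  · linarith [this hy hx hz (by linarith)]
  wlog hyz : z ≤ y generalizing x y z
  · rcases le_total z x with hzx | hxz
    · linarith [this hx hz hy hzx (by linarith)]
    · linarith [this hz hx hy hxz hxy]
  -- the first two terms add up to `(x - y) ^ 2 * (x + y - z)`
  nlinarith [mul_nonneg (sq_nonneg (x - y)) (by linarith : 0 ≤ x + y - z),
    mul_nonneg hz (mul_nonneg (sub_nonneg.2 (hyz.trans hxy)) (sub_nonneg.2 hyz))]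

theorem sq_mul_mul_le_of_mul_le {x y z p q r : ℝ} (hx : 0 ≤ x) (hy : 0 ≤ y) (hz : 0 ≤ z)
    (hxy : x * y ≤ p) (hxz : x * z ≤ q) (hyz : y * z ≤ r) : (x * y * z) ^ 2 ≤ p * q * r :=
  calc (x * y * z) ^ 2 = x * y * (x * z) * (y * z) := by ring
    _ ≤ p * q * r := by
      have hp : 0 ≤ p := (mul_nonneg hx hy).trans hxy
      have hq : 0 ≤ q := (mul_nonneg hx hz).trans hxz
      exact mul_le_mul (mul_le_mul hxy hxz (by positivity) hp) hyz (by positivity)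
        (mul_nonneg hp hq)

theorem triangle_and_mul_mul_le_of_mul_le {u v w x y z : ℝ} (hu : 0 ≤ u) (hv : 0 ≤ v)
    (hx : 0 < x) (hy : 0 < y) (hz : 0 < z)
    (hxy : x * y ≤ u ^ 2 - (v - w) ^ 2) (hxz : x * z ≤ v ^ 2 - (u - w) ^ 2)
    (hyz : y * z ≤ w ^ 2 - (u - v) ^ 2) :
    0 < u + v - w ∧ 0 < u + w - v ∧ 0 < v + w - u ∧
      x * y * z ≤ (u + v - w) * (u + w - v) * (v + w - u) := by
  have hvw : |v - w| < u := abs_lt_of_sq_lt_sq (by nlinarith [mul_pos hx hy]) hu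
  have huw : |u - w| < v := abs_lt_of_sq_lt_sq (by nlinarith [mul_pos hx hz]) hv
  obtain ⟨h₁, h₂⟩ := abs_lt.1 hvw
  obtain ⟨-, h₃⟩ := abs_lt.1 huw
  refine ⟨by linarith, by linarith, by linarith, ?_⟩
  refine (pow_le_pow_iff_left₀ (by positivity) ?_ two_ne_zero).1 ?_
  · exact mul_nonneg (mul_nonneg (by linarith) (by linarith)) (by linarith)
  · calc (x * y * z) ^ 2
          ≤ (u ^ 2 - (v - w) ^ 2) * (v ^ 2 - (u - w) ^ 2) * (w ^ 2 - (u - v) ^ 2) :=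
          sq_mul_mul_le_of_mul_le hx.le hy.le hz.le hxy hxz hyz
      _ = ((u + v - w) * (u + w - v) * (v + w - u)) ^ 2 := by ring

theorem div_add_div_add_div_eq {u v w : ℝ} (hu : u ≠ 0) (hv : v ≠ 0) (hw : w ≠ 0) :
    u / v + v / w + w / u = (u ^ 2 * w + u * v ^ 2 + v * w ^ 2) / (u * v * w) := by
  field_simp

theorem three_mul_le_cyclic {u v w : ℝ} (hu : 0 ≤ u) (hv : 0 ≤ v) (hw : 0 ≤ w) :
    3 * (u * v * w) ≤ u ^ 2 * w + u * v ^ 2 + v * w ^ 2 := by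
  nlinarith [mul_nonneg hu (sq_nonneg (v - w)), mul_nonneg hv (sq_nonneg (u - w)),
    mul_nonneg hw (sq_nonneg (u - v)), mul_nonneg hu (sq_nonneg (u - w)),
    mul_nonneg hv (sq_nonneg (u - v)), mul_nonneg hw (sq_nonneg (v - w)),
    mul_nonneg hu (sq_nonneg (u - v)), mul_nonneg hv (sq_nonneg (v - w)),
    mul_nonneg hw (sq_nonneg (u - w))]

theorem two_mul_cyclic_le {u v w : ℝ} (h₁ : 0 < u + v - w) (h₂ : 0 < u + w - v)
    (h₃ : 0 < v + w - u) :
    2 * (u ^ 2 * w + u * v ^ 2 + v * w ^ 2) ≤ u ^ 3 + v ^ 3 + w ^ 3 + 3 * (u * v * w) := by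
  nlinarith [mul_pos (mul_pos h₁ h₂) h₃,
    mul_nonneg h₁.le (sq_nonneg (u - v)), mul_nonneg h₂.le (sq_nonneg (u - w)),
    mul_nonneg h₃.le (sq_nonneg (v - w)), mul_nonneg h₁.le (sq_nonneg (u - w)),
    mul_nonneg h₂.le (sq_nonneg (v - w)), mul_nonneg h₃.le (sq_nonneg (u - v)),
    mul_nonneg h₁.le (sq_nonneg (v - w)), mul_nonneg h₂.le (sq_nonneg (u - v)),
    mul_nonneg h₃.le (sq_nonneg (u - w))]

theorem strengthened_euler_planar {u v w : ℝ} (h₁ : 0 < u + v - w) (h₂ : 0 < u + w - v)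
    (h₃ : 0 < v + w - u) :
    (u + v - w) * (u + w - v) * (v + w - u) * (u * v * w + u ^ 3 + v ^ 3 + w ^ 3) ≤
      4 * (u * v * w) ^ 2 := by
  obtain ⟨m, n, p, hm, hn, hp, rfl, rfl, rfl⟩ :
      ∃ m n p : ℝ, 0 < m ∧ 0 < n ∧ 0 < p ∧ u = m + n ∧ v = m + p ∧ w = n + p :=
    ⟨(u + v - w) / 2, (u + w - v) / 2, (v + w - u) / 2, by linarith, by linarith, by linarith,
      by ring, by ring, by ring⟩
  nlinarith [schur_nonneg (mul_pos hm hn).le (mul_pos hm hp).le (mul_pos hn hp).le,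
    mul_nonneg (sq_nonneg (m ^ 2)) (sq_nonneg (n - p)),
    mul_nonneg (sq_nonneg (n ^ 2)) (sq_nonneg (m - p)),
    mul_nonneg (sq_nonneg (p ^ 2)) (sq_nonneg (m - n))]

theorem euler_chain_of_le_triangle_prod {u v w B : ℝ} (h₁ : 0 < u + v - w)
    (h₂ : 0 < u + w - v) (h₃ : 0 < v + w - u) (hB : 0 < B)
    (hBT : B ≤ (u + v - w) * (u + w - v) * (v + w - u)) :
    2 * u * v * w / B ≥ (u * v * w + u ^ 3 + v ^ 3 + w ^ 3) / (2 * u * v * w) ∧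
    (u * v * w + u ^ 3 + v ^ 3 + w ^ 3) / (2 * u * v * w) ≥ u / v + v / w + w / u - 1 ∧
    u / v + v / w + w / u - 1 ≥ 2 / 3 * (u / v + v / w + w / u) ∧
    2 / 3 * (u / v + v / w + w / u) ≥ 2 := by
  have hu : 0 < u := by linarith
  have hv : 0 < v := by linarith
  have hw : 0 < w := by linarith
  have huvw : 0 < u * v * w := by positivity
  have hcyclic := div_add_div_add_div_eq hu.ne' hv.ne' hw.ne'
  have hratio : 3 ≤ u / v + v / w + w / u := by
    rw [hcyclic, le_div_iff₀ huvw]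
    exact three_mul_le_cyclic hu.le hv.le hw.le
  refine ⟨?_, ?_, by linarith, by linarith⟩
  · calc (u * v * w + u ^ 3 + v ^ 3 + w ^ 3) / (2 * u * v * w)
        ≤ 2 * u * v * w / ((u + v - w) * (u + w - v) * (v + w - u)) := by
          rw [div_le_div_iff₀ (by positivity) (by positivity)]
          nlinarith [strengthened_euler_planar h₁ h₂ h₃]
      _ ≤ 2 * u * v * w / B := div_le_div_of_nonneg_left (by positivity) hB hBT
  · rw [hcyclic, ge_iff_le, div_sub_one huvw.ne', div_le_div_iff₀ huvw (by positivity)]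
    nlinarith [two_mul_cyclic_le h₁ h₂ h₃]

theorem Real.sin_add_mul_sin_sub (x y : ℝ) :
    sin (x + y) * sin (x - y) = sin x ^ 2 - sin y ^ 2 := by
  rw [sin_add, sin_sub]
  linear_combination sin x ^ 2 * sin_sq_add_cos_sq y - sin y ^ 2 * sin_sq_add_cos_sq x

theorem Real.sq_sin_half_sub_sin_half_le {x y : ℝ} (hx : 0 ≤ x) (hy : 0 ≤ y)
    (hxy : x + y ≤ 2 * π) :
    (sin (x / 2) - sin (y / 2)) ^ 2 ≤ sin ((x - y) / 2) ^ 2 := by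
  have hsub : sin (x / 2) - sin (y / 2) = 2 * sin ((x - y) / 4) * cos ((x + y) / 4) := by
    rw [sin_sub_sin]; ring_nf
  have hdouble : sin ((x - y) / 2) = 2 * sin ((x - y) / 4) * cos ((x - y) / 4) := by
    rw [← sin_two_mul]; ring_nf
  have hcos_nonneg : 0 ≤ cos ((x + y) / 4) :=
    cos_nonneg_of_mem_Icc ⟨by linarith [pi_pos], by linarith⟩
  have hcos_le : cos ((x + y) / 4) ≤ cos ((x - y) / 4) := by
    rw [← cos_abs ((x - y) / 4)]
    exact cos_le_cos_of_nonneg_of_le_pi (abs_nonneg _) (by linarith [pi_pos])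
      (abs_le.2 ⟨by linarith, by linarith⟩)
  rw [hsub, hdouble, mul_pow _ (cos _), mul_pow _ (cos _)]
  gcongr

theorem Real.sin_mul_sin_le_sin_half_sq_sub {a b c : ℝ} (hb : 0 ≤ b) (hc : 0 ≤ c)
    (hbc : b + c ≤ 2 * π) :
    sin ((a + b - c) / 2) * sin ((a + c - b) / 2) ≤
      sin (a / 2) ^ 2 - (sin (b / 2) - sin (c / 2)) ^ 2 := by
  have h := sin_add_mul_sin_sub (a / 2) ((b - c) / 2)
  rw [show a / 2 + (b - c) / 2 = (a + b - c) / 2 by ring,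
    show a / 2 - (b - c) / 2 = (a + c - b) / 2 by ring] at h
  linarith [sq_sin_half_sub_sin_half_le hb hc hbc]

theorem stmt_15 (a b c : ℝ) (ha : 0 < a) (hb : 0 < b) (hc : 0 < c)
    (hab : a < b + c) (hbc : b < a + c) (hca : c < a + b)
    (hsum : a + b + c < 2 * Real.pi) :
    let sa := Real.sin (a / 2)
    let sb := Real.sin (b / 2)
    let sc := Real.sin (c / 2)
    let B := Real.sin ((a + b - c) / 2) * Real.sin ((a + c - b) / 2) *
      Real.sin ((b + c - a) / 2)
    2 * sa * sb * sc / B ≥ (sa * sb * sc + sa ^ 3 + sb ^ 3 + sc ^ 3) / (2 * sa * sb * sc) ∧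
    (sa * sb * sc + sa ^ 3 + sb ^ 3 + sc ^ 3) / (2 * sa * sb * sc) ≥
      sa / sb + sb / sc + sc / sa - 1 ∧
    sa / sb + sb / sc + sc / sa - 1 ≥ 2 / 3 * (sa / sb + sb / sc + sc / sa) ∧
    2 / 3 * (sa / sb + sb / sc + sc / sa) ≥ 2 := by
  intro sa sb sc B
  have sin_half_pos : ∀ t, 0 < t → t < 2 * π → 0 < sin (t / 2) := fun t h0 h1 =>
    sin_pos_of_pos_of_lt_pi (by linarith) (by linarith)
  have hab_c := sin_mul_sin_le_sin_half_sq_sub (a := a) hb.le hc.le (by linarith)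
  have hba_c := sin_mul_sin_le_sin_half_sq_sub (a := b) ha.le hc.le (by linarith)
  have hca_b := sin_mul_sin_le_sin_half_sq_sub (a := c) ha.le hb.le (by linarith)
  rw [add_comm b a] at hba_c
  rw [add_comm c a, add_comm c b] at hca_b
  have hx := sin_half_pos (a + b - c) (by linarith) (by linarith)
  have hy := sin_half_pos (a + c - b) (by linarith) (by linarith)
  have hz := sin_half_pos (b + c - a) (by linarith) (by linarith)
  obtain ⟨h₁, h₂, h₃, hBT⟩ := triangle_and_mul_mul_le_of_mul_le
    (sin_half_pos a ha (by linarith)).le (sin_half_pos b hb (by linarith)).le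
    hx hy hz hab_c hba_c hca_b
  exact euler_chain_of_le_triangle_prod h₁ h₂ h₃ (by positivity) hBT
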